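/- For every θ > 0 and every ε ∈ (0,1), the derivative of the regularized potential satisfies |F_ε'(s)| ≤ |F'(s)| for every s ∈ (−1,1), where F'(s) = (θ/2)·log((1+s)/(1−s)). -/

import Mathlib

open Real Set Filter MeasureTheory

/-- The Flory–Huggins potential. -/
noncomputable def FH (θ s : ℝ) : ℝ :=
  (θ / 2) * ((1 + s) * Real.log (1 + s) + (1 - s) * Real.log (1 - s))

/-- Its first derivative on `(-1,1)`. -/
noncomputable def FH' (θ s : ℝ) : ℝ :=
  (θ / 2) * Real.log ((1 + s) / (1 - s))

/-- The regularized (quadratic extension) Flory–Huggins potential `F_ε`.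
Note that `F''(±(1-ε)) = θ/(ε(2-ε))`. -/
noncomputable def FHreg (θ ε s : ℝ) : ℝ :=
  if 1 - ε < s then
    FH θ (1 - ε) + FH' θ (1 - ε) * (s - (1 - ε))
      + (1 / 2) * (θ / (ε * (2 - ε))) * (s - (1 - ε)) ^ 2
  else if s < -1 + ε then
    FH θ (-1 + ε) + FH' θ (-1 + ε) * (s - (-1 + ε))
      + (1 / 2) * (θ / (ε * (2 - ε))) * (s - (-1 + ε)) ^ 2
  else FH θ s

open Topology

/-! `F_ε` is even, so `F_ε'` is odd and it suffices to take `0 ≤ s`. On `[0, 1 - ε)` we have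
`F_ε' = F'`. For `s ≥ 1 - ε`, `F_ε'(s)` is the value at `s` of the tangent line of `F'` at
`1 - ε`: it is nonnegative because `F'(1 - ε) ≥ 0`, and it is at most `F'(s)` because
`F'' = θ / (1 - s²)` increases on `[0, 1)`, so `F'` lies above its tangent there. -/

theorem HasDerivAt.of_nhdsLE_of_nhdsGE {f g h : ℝ → ℝ} {x f' : ℝ} (hg : HasDerivAt g f' x)
    (hh : HasDerivAt h f' x) (hfg : f =ᶠ[𝓝[≤] x] g) (hfh : f =ᶠ[𝓝[≥] x] h) :
    HasDerivAt f f' x := by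
  have hU := (hg.hasDerivWithinAt.congr_of_eventuallyEq_of_mem hfg self_mem_Iic).union
    (hh.hasDerivWithinAt.congr_of_eventuallyEq_of_mem hfh self_mem_Ici)
  rwa [Iic_union_Ici, hasDerivWithinAt_univ] at hU

theorem add_mul_sub_le_of_hasDerivAt {f f' : ℝ → ℝ} {a b : ℝ} (hab : a ≤ b)
    (hf : ∀ x ∈ Icc a b, HasDerivAt f (f' x) x) (hf' : ∀ x ∈ Ioo a b, f' a ≤ f' x) :
    f a + f' a * (b - a) ≤ f b := by
  have hmono : MonotoneOn (fun x => f x - f' a * x) (Icc a b) := by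
    refine monotoneOn_of_hasDerivWithinAt_nonneg (convex_Icc a b) (f' := fun x => f' x - f' a)
      ?_ ?_ ?_
    · exact fun x hx => ((hf x hx).continuousAt.sub (continuousAt_const.mul continuousAt_id))
        |>.continuousWithinAt
    · rw [interior_Icc]
      exact fun x hx => ((hf x (Ioo_subset_Icc_self hx)).sub
        ((hasDerivAt_id x).const_mul (f' a))).hasDerivWithinAt.congr_deriv (by ring)
    · rw [interior_Icc]
      exact fun x hx => sub_nonneg.2 (hf' x hx)
  have := hmono (left_mem_Icc.2 hab) (right_mem_Icc.2 hab) hab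
  simp only at this
  linarith

theorem hasDerivAt_quadratic (p q r t x : ℝ) :
    HasDerivAt (fun s => p + q * (s - t) + (1 / 2) * r * (s - t) ^ 2) (q + r * (x - t)) x := by
  have h := (hasDerivAt_id x).sub_const t
  refine (((h.const_mul q).const_add p).add ((h.pow 2).const_mul (1 / 2 * r))).congr_deriv ?_
  simp only [id]
  ring

section FloryHuggins

variable (θ : ℝ)

theorem FH_neg (s : ℝ) : FH θ (-s) = FH θ s := by
  simp only [FH, sub_neg_eq_add, ← sub_eq_add_neg]
  ring

theorem FH'_neg (s : ℝ) : FH' θ (-s) = -FH' θ s := by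
  have h : (1 + -s) / (1 - -s) = ((1 + s) / (1 - s))⁻¹ := by
    rw [inv_div, sub_neg_eq_add, ← sub_eq_add_neg]
  rw [FH', FH', h, Real.log_inv]
  ring

theorem FH'_nonneg (hθ : 0 ≤ θ) {s : ℝ} (hs0 : 0 ≤ s) (hs1 : s < 1) : 0 ≤ FH' θ s :=
  mul_nonneg (by positivity) (Real.log_nonneg ((one_le_div (by linarith)).2 (by linarith)))

theorem hasDerivAt_FH {s : ℝ} (hs : s ∈ Ioo (-1) 1) : HasDerivAt (FH θ) (FH' θ s) s := by
  obtain ⟨h1, h2⟩ := hs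
  have hp := (Real.hasDerivAt_mul_log (by linarith : 1 + s ≠ 0)).comp s
    ((hasDerivAt_id s).const_add 1)
  have hm := (Real.hasDerivAt_mul_log (by linarith : 1 - s ≠ 0)).comp s
    ((hasDerivAt_id s).const_sub 1)
  refine ((hp.add hm).const_mul (θ / 2)).congr_deriv ?_
  rw [FH', Real.log_div (by linarith) (by linarith)]
  ring

theorem hasDerivAt_FH' {s : ℝ} (hs : s ∈ Ioo (-1) 1) :
    HasDerivAt (FH' θ) (θ / (1 - s ^ 2)) s := by
  obtain ⟨h1, h2⟩ := hs
  have hp : 1 + s ≠ 0 := by linarith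
  have hm : 1 - s ≠ 0 := by linarith
  have hq : HasDerivAt (fun x => (1 + x) / (1 - x)) (2 / (1 - s) ^ 2) s := by
    refine (((hasDerivAt_id s).const_add 1).fun_div ((hasDerivAt_id s).const_sub 1) hm)
      |>.congr_deriv ?_
    simp only [id]
    ring
  have hsq : 1 - s ^ 2 ≠ 0 := by nlinarith
  refine ((hq.log (div_ne_zero hp hm)).const_mul (θ / 2)).congr_deriv ?_
  field_simp
  ring

end FloryHuggins

section Regularized

variable (θ : ℝ) {ε : ℝ}

theorem FHreg_neg (hε : ε ≤ 1) (s : ℝ) : FHreg θ ε (-s) = FHreg θ ε s := by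
  have e : -1 + ε = -(1 - ε) := by ring
  unfold FHreg
  rw [e]
  split_ifs <;> first | linarith | (simp only [FH_neg, FH'_neg] <;> ring)

theorem deriv_FHreg_neg (hε : ε ≤ 1) (s : ℝ) :
    deriv (FHreg θ ε) (-s) = -deriv (FHreg θ ε) s := by
  have h := deriv_comp_neg (f := FHreg θ ε) (x := s)
  simp only [FHreg_neg θ hε] at h
  rw [h, neg_neg]

theorem FHreg_eqOn_Icc : EqOn (FHreg θ ε) (FH θ) (Icc (-1 + ε) (1 - ε)) := by
  intro s hs
  rw [FHreg, if_neg hs.2.not_gt, if_neg hs.1.not_gt]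

theorem FHreg_eqOn_Ici (hε : ε ≤ 1) :
    EqOn (FHreg θ ε) (fun s => FH θ (1 - ε) + FH' θ (1 - ε) * (s - (1 - ε))
      + (1 / 2) * (θ / (ε * (2 - ε))) * (s - (1 - ε)) ^ 2) (Ici (1 - ε)) := by
  intro s hs
  rcases (mem_Ici.1 hs).lt_or_eq with h | rfl
  · rw [FHreg, if_pos h]
  · rw [FHreg, if_neg (lt_irrefl _), if_neg (by linarith)]
    ring

theorem hasDerivAt_FHreg_of_mem_Ioo (hε : 0 < ε) {s : ℝ} (hs : s ∈ Ioo (-1 + ε) (1 - ε)) :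
    HasDerivAt (FHreg θ ε) (FH' θ s) s :=
  (hasDerivAt_FH θ ⟨by linarith [hs.1], by linarith [hs.2]⟩).congr_of_eventuallyEq
    (eventuallyEq_of_mem (Ioo_mem_nhds hs.1 hs.2)
      ((FHreg_eqOn_Icc θ).mono Ioo_subset_Icc_self))

theorem hasDerivAt_FHreg_of_le (hε : ε ∈ Ioo 0 1) {s : ℝ} (hs : 1 - ε ≤ s) :
    HasDerivAt (FHreg θ ε) (FH' θ (1 - ε) + θ / (ε * (2 - ε)) * (s - (1 - ε))) s := by
  obtain ⟨hε0, hε1⟩ := hε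
  have hq :=
    hasDerivAt_quadratic (FH θ (1 - ε)) (FH' θ (1 - ε)) (θ / (ε * (2 - ε))) (1 - ε) s
  rcases hs.lt_or_eq with hs | rfl
  · exact hq.congr_of_eventuallyEq <| eventuallyEq_of_mem (Ioi_mem_nhds hs)
      ((FHreg_eqOn_Ici θ hε1.le).mono Ioi_subset_Ici_self)
  · refine HasDerivAt.of_nhdsLE_of_nhdsGE (g := FH θ) ?_ hq
      (eventuallyEq_of_mem (Icc_mem_nhdsLE (by linarith)) (FHreg_eqOn_Icc θ))
      (eventuallyEq_of_mem self_mem_nhdsWithin (FHreg_eqOn_Ici θ hε1.le))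
    simpa using hasDerivAt_FH θ ⟨by linarith, by linarith⟩

theorem deriv_FHreg_mem_Icc (hθ : 0 < θ) (hε : ε ∈ Ioo 0 1) {s : ℝ} (hs : 1 - ε ≤ s)
    (hs1 : s < 1) : deriv (FHreg θ ε) s ∈ Icc 0 (FH' θ s) := by
  obtain ⟨hε0, hε1⟩ := hε
  rw [(hasDerivAt_FHreg_of_le θ ⟨hε0, hε1⟩ hs).deriv]
  have hc : θ / (ε * (2 - ε)) = θ / (1 - (1 - ε) ^ 2) := by ring_nf
  constructor
  · have := FH'_nonneg θ hθ.le (by linarith : 0 ≤ 1 - ε) (by linarith)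
    have : 0 < ε * (2 - ε) := by nlinarith
    positivity
  · rw [hc]
    refine add_mul_sub_le_of_hasDerivAt (f' := fun x => θ / (1 - x ^ 2)) hs
      (fun x hx => hasDerivAt_FH' θ ⟨by linarith [hx.1], by linarith [hx.2]⟩) ?_
    intro x hx
    have : (1 - ε) ^ 2 < x ^ 2 := by nlinarith [hx.1]
    have : 0 < 1 - x ^ 2 := by nlinarith [hx.1, hx.2]
    gcongr

end Regularized

theorem FHreg_deriv_abs_le (θ ε : ℝ) (hθ : 0 < θ) (hε : ε ∈ Set.Ioo (0 : ℝ) 1) :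
    ∀ s ∈ Set.Ioo (-1 : ℝ) 1, |deriv (FHreg θ ε) s| ≤ |FH' θ s| := by
  intro s hs
  wlog hs0 : 0 ≤ s generalizing s
  · have h := this (-s) ⟨by linarith [hs.2], by linarith [hs.1]⟩ (by linarith)
    rwa [deriv_FHreg_neg θ hε.2.le, abs_neg, FH'_neg, abs_neg] at h
  rcases lt_or_ge s (1 - ε) with hmid | hright
  · rw [(hasDerivAt_FHreg_of_mem_Ioo θ hε.1 ⟨by linarith [hε.2], hmid⟩).deriv]
  · obtain ⟨h0, hle⟩ := deriv_FHreg_mem_Icc θ hθ hε hright hs.2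
    rwa [abs_of_nonneg h0, abs_of_nonneg (h0.trans hle)]
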